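/- arXiv:1808.01806 — 2 statements merged into one kernel-verified Lean document; each statement's English description precedes it below -/
import Mathlib

section
/- Under the abstract variational framework, let γ₁, γ₂ : X → ℝ be bounded measurable with γ₁ ≥ 0 μ-a.e., let ℓ : V → ℝ be a linear functional, and let u₁, u₂ ∈ V be weak solutions for (γ₁, ℓ) and (γ₂, ℓ) respectively. Then ∫_X (γ₁ − γ₂)·(Tu₂)² dμ ≥ ℓ(u₂) − ℓ(u₁). (This is the first inequality of the monotonicity estimate, Lemma 4.1: ∫_Γ (γ₁ − γ₂) u₂² ds ≥ ∫_{∂Ω} g (Λ(γ₂) − Λ(γ₁)) g ds.) -/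
/-!
The weak formulation for `γ₁` makes `u₁` a maximiser of the energy
`v ↦ 2 ℓ(v) - a(v, v) - ∫ γ₁ (T v)² dμ` (Dirichlet principle: the symmetric form
`a + ∫ γ₁ (T ·)(T ·) dμ` is positive semidefinite because `γ₁ ≥ 0`). Evaluating this at
`v = u₂` and replacing `a(u₂, u₂)` by means of the weak formulation for `γ₂` tested with `u₂`
gives the estimate.
-/

open MeasureTheory

section
variable {R M : Type*} [CommSemiring R] [AddCommMonoid M] [Module R M]

def bilinFormOfSymm (a : M → M → R) (ha_symm : ∀ v w, a v w = a w v)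
    (ha_add : ∀ u v w, a (u + v) w = a u w + a v w)
    (ha_smul : ∀ (c : R) (v w : M), a (c • v) w = c * a v w) : LinearMap.BilinForm R M :=
  LinearMap.mk₂ R a ha_add ha_smul
    (fun u v w => by simp only [ha_symm u, ha_add])
    (fun c v w => by simp only [ha_symm v, ha_smul, smul_eq_mul])

theorem bilinFormOfSymm_apply {a : M → M → R} {ha_symm ha_add ha_smul} (v w : M) :
    bilinFormOfSymm a ha_symm ha_add ha_smul v w = a v w := rfl
end

section
variable {X : Type*} [MeasurableSpace X] {μ : Measure X}

theorem integrable_mul_mul_of_memLp_two {γ f g : X → ℝ} {C : ℝ} (hγ : AEStronglyMeasurable γ μ)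
    (hγC : ∀ᵐ x ∂μ, |γ x| ≤ C) (hf : MemLp f 2 μ) (hg : MemLp g 2 μ) :
    Integrable (fun x => γ x * f x * g x) μ := by
  simpa only [Pi.mul_apply, mul_assoc] using (hf.integrable_mul hg).bdd_mul hγ hγC

variable {V : Type*} [AddCommGroup V] [Module ℝ V]

noncomputable def weightedTraceForm (T : V →ₗ[ℝ] X → ℝ) (γ : X → ℝ) (μ : Measure X)
    (hint : ∀ v w, Integrable (fun x => γ x * T v x * T w x) μ) : LinearMap.BilinForm ℝ V :=
  LinearMap.mk₂ ℝ (fun v w => ∫ x, γ x * T v x * T w x ∂μ)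
    (fun u v w => by
      simp only [map_add, Pi.add_apply, mul_add, add_mul]
      exact integral_add (hint u w) (hint v w))
    (fun c v w => by
      simp only [map_smul, Pi.smul_apply, smul_eq_mul, ← integral_const_mul]
      congr 1 with x
      ring)
    (fun u v w => by
      simp only [map_add, Pi.add_apply, mul_add]
      exact integral_add (hint u v) (hint u w))
    (fun c v w => by
      simp only [map_smul, Pi.smul_apply, smul_eq_mul, ← integral_const_mul]
      congr 1 with x
      ring)

theorem weightedTraceForm_apply {T : V →ₗ[ℝ] X → ℝ} {γ : X → ℝ} {hint} (v w : V) :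
    weightedTraceForm T γ μ hint v w = ∫ x, γ x * T v x * T w x ∂μ := rfl

theorem weightedTraceForm_isSymm {T : V →ₗ[ℝ] X → ℝ} {γ : X → ℝ} {hint} :
    (weightedTraceForm T γ μ hint).IsSymm :=
  ⟨fun v w => by simp only [weightedTraceForm_apply, mul_right_comm]⟩

theorem weightedTraceForm_apply_self_nonneg {T : V →ₗ[ℝ] X → ℝ} {γ : X → ℝ} {hint}
    (hγ : ∀ᵐ x ∂μ, 0 ≤ γ x) (v : V) : 0 ≤ weightedTraceForm T γ μ hint v v :=
  integral_nonneg_of_ae <| hγ.mono fun x hx => by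
    simpa only [Pi.zero_apply, mul_assoc] using mul_nonneg hx (mul_self_nonneg (T v x))

end

theorem LinearMap.BilinForm.IsSymm.two_mul_sub_apply_self_le {V : Type*} [AddCommGroup V]
    [Module ℝ V] {B : LinearMap.BilinForm ℝ V} (hB : B.IsSymm) (hB_nonneg : ∀ v, 0 ≤ B v v)
    {ℓ : V →ₗ[ℝ] ℝ} {u : V} (hu : B u = ℓ) (v : V) : 2 * ℓ v - B v v ≤ ℓ u := by
  have := hB_nonneg (u - v)
  simp only [map_sub, LinearMap.sub_apply, hB.eq v u, hu] at this
  linarith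

/-- First inequality of the monotonicity estimate (Lemma 4.1):
`∫_X (γ₁ − γ₂)(Tu₂)² dμ ≥ ℓ(u₂) − ℓ(u₁)`. -/
theorem monotonicity_estimate_first
    {V : Type*} [AddCommGroup V] [Module ℝ V]
    {X : Type*} [MeasurableSpace X] {μ : Measure X}
    (a : V → V → ℝ)
    (ha_symm : ∀ v w, a v w = a w v)
    (ha_add : ∀ u v w, a (u + v) w = a u w + a v w)
    (ha_smul : ∀ (c : ℝ) (v w : V), a (c • v) w = c * a v w)
    (ha_nonneg : ∀ v, 0 ≤ a v v)
    (T : V →ₗ[ℝ] (X → ℝ))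
    (hT : ∀ v, MemLp (T v) 2 μ)
    (γ₁ γ₂ : X → ℝ)
    (hγ₁m : Measurable γ₁) (hγ₂m : Measurable γ₂)
    (hγ₁b : ∃ C, ∀ x, |γ₁ x| ≤ C) (hγ₂b : ∃ C, ∀ x, |γ₂ x| ≤ C)
    (hγ₁0 : ∀ᵐ x ∂μ, 0 ≤ γ₁ x)
    (ℓ : V →ₗ[ℝ] ℝ)
    (u₁ u₂ : V)
    (hu₁ : ∀ w, a u₁ w + ∫ x, γ₁ x * T u₁ x * T w x ∂μ = ℓ w)
    (hu₂ : ∀ w, a u₂ w + ∫ x, γ₂ x * T u₂ x * T w x ∂μ = ℓ w) :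
    ∫ x, (γ₁ x - γ₂ x) * (T u₂ x) ^ 2 ∂μ ≥ ℓ u₂ - ℓ u₁ := by
  obtain ⟨C₁, hC₁⟩ := hγ₁b
  obtain ⟨C₂, hC₂⟩ := hγ₂b
  have hint₁ (v w : V) : Integrable (fun x => γ₁ x * T v x * T w x) μ :=
    integrable_mul_mul_of_memLp_two hγ₁m.aestronglyMeasurable (.of_forall hC₁) (hT v) (hT w)
  have hint₂ : Integrable (fun x => γ₂ x * T u₂ x * T u₂ x) μ :=
    integrable_mul_mul_of_memLp_two hγ₂m.aestronglyMeasurable (.of_forall hC₂) (hT u₂) (hT u₂)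
  let B₁ := bilinFormOfSymm a ha_symm ha_add ha_smul + weightedTraceForm T γ₁ μ hint₁
  have hB₁ : B₁.IsSymm := .add ⟨ha_symm⟩ weightedTraceForm_isSymm
  have hB₁_nonneg (v : V) : 0 ≤ B₁ v v :=
    add_nonneg (ha_nonneg v) (weightedTraceForm_apply_self_nonneg hγ₁0 v)
  have hmax := hB₁.two_mul_sub_apply_self_le hB₁_nonneg (LinearMap.ext hu₁) u₂
  have hsplit : ∫ x, (γ₁ x - γ₂ x) * (T u₂ x) ^ 2 ∂μ
      = ∫ x, γ₁ x * T u₂ x * T u₂ x ∂μ - ∫ x, γ₂ x * T u₂ x * T u₂ x ∂μ := by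
    rw [← integral_sub (hint₁ u₂ u₂) hint₂]
    congr 1 with x
    ring
  have hu₂_self := hu₂ u₂
  simp only [B₁, LinearMap.add_apply, bilinFormOfSymm_apply, weightedTraceForm_apply] at hmax
  linarith
end

section
/- Under the abstract variational framework, let γ, γ' : X → ℝ be bounded measurable with γ ≥ 0 and γ' ≥ 0 μ-a.e., let ℓ : V → ℝ be a linear functional, and let u, u' ∈ V be weak solutions for (γ, ℓ) and (γ', ℓ) respectively. Then ∫_X (γ' − γ)·(Tu)² dμ ≥ ∫_X (γ' − γ)·(Tu')² dμ. (This is inequality (5.1) from step (a) of the proof of Theorem 5.2: with δ = γ' − γ, one has ∫_Γ δ |u_γ|² ds ≥ ∫_Γ δ |u_{γ+δ}|² ds.) -/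
/-!
Put `b_β v w = a v w + ∫ β (T v) (T w) dμ`, a positive semidefinite symmetric form for `β ≥ 0`.
Weak solutions satisfy `b_γ u = ℓ = b_γ' u'`, so with `w = u - u'` and `d = b_γ' - b_γ` one gets
`b_γ' w w = d u w` and `b_γ w w = d u' w`; adding and using the symmetry of `d`,
`d u u - d u' u' = b_γ w w + b_γ' w w ≥ 0`, and `d v v = ∫ (γ' - γ) (T v)² dμ`.
-/

open MeasureTheory
open LinearMap (BilinForm)

namespace LinearMap.BilinForm

section Semiring

variable {R M : Type*} [CommSemiring R] [AddCommMonoid M] [Module R M]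

def ofSymm (a : M → M → R) (ha_symm : ∀ v w, a v w = a w v)
    (ha_add : ∀ u v w, a (u + v) w = a u w + a v w)
    (ha_smul : ∀ (c : R) (v w : M), a (c • v) w = c * a v w) : BilinForm R M :=
  LinearMap.mk₂ R a ha_add ha_smul
    (fun v w w' => by rw [ha_symm, ha_add, ha_symm w, ha_symm w'])
    (fun c v w => by rw [ha_symm, ha_smul, ha_symm w, smul_eq_mul])

theorem isPosSemidef_ofSymm [LE R] (a : M → M → R) (ha_symm : ∀ v w, a v w = a w v)
    (ha_add : ∀ u v w, a (u + v) w = a u w + a v w)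
    (ha_smul : ∀ (c : R) (v w : M), a (c • v) w = c * a v w) (ha_nonneg : ∀ v, 0 ≤ a v v) :
    (ofSymm a ha_symm ha_add ha_smul).IsPosSemidef :=
  ⟨⟨ha_symm⟩, ⟨ha_nonneg⟩⟩

end Semiring

section Ring

variable {R M : Type*} [CommRing R] [AddCommGroup M] [Module R M]

theorem sub_apply_self_add_apply_self_eq {b b' : BilinForm R M} (hb : b.IsSymm) (hb' : b'.IsSymm)
    {u u' : M} (h : b u = b' u') :
    (b' - b) u u - (b' - b) u' u' = b (u - u') (u - u') + b' (u - u') (u - u') := by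
  have h' : ∀ w, b u w = b' u' w := fun w => congr($h w)
  simp only [LinearMap.sub_apply, map_sub]
  linear_combination 2 * h' u' - 2 * h' u + hb.eq u' u + hb'.eq u u'

theorem sub_apply_self_le_of_apply_eq [PartialOrder R] [IsOrderedRing R] {b b' : BilinForm R M}
    (hb : b.IsPosSemidef) (hb' : b'.IsPosSemidef) {u u' : M} (h : b u = b' u') :
    (b' - b) u' u' ≤ (b' - b) u u := by
  rw [← sub_nonneg, sub_apply_self_add_apply_self_eq hb.isSymm hb'.isSymm h]
  exact add_nonneg (hb.isNonneg.nonneg _) (hb'.isNonneg.nonneg _)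

end Ring

end LinearMap.BilinForm

namespace MeasureTheory

variable {X : Type*} [MeasurableSpace X] {μ : Measure X}

theorem MemLp.integrable_mul_mul_of_top {β f g : X → ℝ} (hβ : MemLp β ⊤ μ) (hf : MemLp f 2 μ)
    (hg : MemLp g 2 μ) : Integrable (fun x => β x * f x * g x) μ :=
  (hf.mul hβ (r := 2)).integrable_mul hg

variable {V : Type*} [AddCommGroup V] [Module ℝ V] (T : V →ₗ[ℝ] (X → ℝ))
  (hT : ∀ v, MemLp (T v) 2 μ)

noncomputable def weightedL2Form {β : X → ℝ} (hβ : MemLp β ⊤ μ) : BilinForm ℝ V :=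
  LinearMap.mk₂ ℝ (fun v w => ∫ x, β x * T v x * T w x ∂μ)
    (fun v v' w => by
      rw [← integral_add (hβ.integrable_mul_mul_of_top (hT v) (hT w))
        (hβ.integrable_mul_mul_of_top (hT v') (hT w))]
      simp only [map_add, Pi.add_apply]
      congr 1 with x
      ring)
    (fun c v w => by
      rw [smul_eq_mul, ← integral_const_mul]
      simp only [map_smul, Pi.smul_apply, smul_eq_mul]
      congr 1 with x
      ring)
    (fun v w w' => by
      rw [← integral_add (hβ.integrable_mul_mul_of_top (hT v) (hT w))
        (hβ.integrable_mul_mul_of_top (hT v) (hT w'))]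
      simp only [map_add, Pi.add_apply]
      congr 1 with x
      ring)
    (fun c v w => by
      rw [smul_eq_mul, ← integral_const_mul]
      simp only [map_smul, Pi.smul_apply, smul_eq_mul]
      congr 1 with x
      ring)

theorem weightedL2Form_apply {β : X → ℝ} (hβ : MemLp β ⊤ μ) (v w : V) :
    weightedL2Form T hT hβ v w = ∫ x, β x * T v x * T w x ∂μ :=
  rfl

theorem isPosSemidef_weightedL2Form {β : X → ℝ} (hβ : MemLp β ⊤ μ) (hβ0 : ∀ᵐ x ∂μ, 0 ≤ β x) :
    (weightedL2Form T hT hβ).IsPosSemidef where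
  eq v w := by
    simp only [weightedL2Form_apply]
    congr 1 with x
    ring
  nonneg v := integral_nonneg_of_ae <| hβ0.mono fun x hx => by
    simpa only [Pi.zero_apply, mul_assoc] using mul_nonneg hx (mul_self_nonneg (T v x))

theorem weightedL2Form_sub_apply_self {β β' : X → ℝ} (hβ : MemLp β ⊤ μ) (hβ' : MemLp β' ⊤ μ)
    (v : V) :
    (weightedL2Form T hT hβ' - weightedL2Form T hT hβ) v v = ∫ x, (β' x - β x) * T v x ^ 2 ∂μ := by
  rw [LinearMap.sub_apply, LinearMap.sub_apply, weightedL2Form_apply, weightedL2Form_apply,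
    ← integral_sub (hβ'.integrable_mul_mul_of_top (hT v) (hT v))
      (hβ.integrable_mul_mul_of_top (hT v) (hT v))]
  congr 1 with x
  ring

end MeasureTheory

open LinearMap.BilinForm in
/-- Inequality (5.1) from step (a) of the proof of Theorem 5.2: with `δ = γ' − γ`,
`∫_X (γ' − γ)(Tu)² dμ ≥ ∫_X (γ' − γ)(Tu')² dμ`. -/
theorem monotonicity_coefficient_swap
    {V : Type*} [AddCommGroup V] [Module ℝ V]
    {X : Type*} [MeasurableSpace X] {μ : Measure X}
    (a : V → V → ℝ)
    (ha_symm : ∀ v w, a v w = a w v)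
    (ha_add : ∀ u v w, a (u + v) w = a u w + a v w)
    (ha_smul : ∀ (c : ℝ) (v w : V), a (c • v) w = c * a v w)
    (ha_nonneg : ∀ v, 0 ≤ a v v)
    (T : V →ₗ[ℝ] (X → ℝ))
    (hT : ∀ v, MemLp (T v) 2 μ)
    (γ γ' : X → ℝ)
    (hγm : Measurable γ) (hγ'm : Measurable γ')
    (hγb : ∃ C, ∀ x, |γ x| ≤ C) (hγ'b : ∃ C, ∀ x, |γ' x| ≤ C)
    (hγ0 : ∀ᵐ x ∂μ, 0 ≤ γ x)
    (hγ'0 : ∀ᵐ x ∂μ, 0 ≤ γ' x)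
    (ℓ : V →ₗ[ℝ] ℝ)
    (u u' : V)
    (hu : ∀ w, a u w + ∫ x, γ x * T u x * T w x ∂μ = ℓ w)
    (hu' : ∀ w, a u' w + ∫ x, γ' x * T u' x * T w x ∂μ = ℓ w) :
    ∫ x, (γ' x - γ x) * (T u x) ^ 2 ∂μ ≥ ∫ x, (γ' x - γ x) * (T u' x) ^ 2 ∂μ := by
  have memLp_top_of_bounded : ∀ β : X → ℝ, Measurable β → (∃ C, ∀ x, |β x| ≤ C) → MemLp β ⊤ μ :=
    fun β hβm ⟨C, hC⟩ => memLp_top_of_bound hβm.aestronglyMeasurable C (ae_of_all _ hC)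
  have hγ := memLp_top_of_bounded γ hγm hγb
  have hγ' := memLp_top_of_bounded γ' hγ'm hγ'b
  let A := ofSymm a ha_symm ha_add ha_smul
  have hA := isPosSemidef_ofSymm a ha_symm ha_add ha_smul ha_nonneg
  have hsol : (A + weightedL2Form T hT hγ) u = (A + weightedL2Form T hT hγ') u' :=
    LinearMap.ext fun w => (hu w).trans (hu' w).symm
  have key := sub_apply_self_le_of_apply_eq (hA.add (isPosSemidef_weightedL2Form T hT hγ hγ0))
    (hA.add (isPosSemidef_weightedL2Form T hT hγ' hγ'0)) hsol
  have hdiff : A + weightedL2Form T hT hγ' - (A + weightedL2Form T hT hγ) =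
      weightedL2Form T hT hγ' - weightedL2Form T hT hγ := by abel
  rwa [hdiff, weightedL2Form_sub_apply_self, weightedL2Form_sub_apply_self] at key
end
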